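/- Let A be an m×n real matrix, v : ℕ → ℝ^m, w z : ℕ → ℝ^n, H : ℕ → (n×n real matrices) satisfying the scaled ABS recursion H (k+1) = H k - (1/δ k) • vecMulVec (H k *ᵥ (Aᵀ *ᵥ v k)) ((H k)ᵀ *ᵥ w k) with δ k = w k ⬝ᵥ (H k *ᵥ (Aᵀ *ᵥ v k)) ≠ 0 for all 1 ≤ k ≤ i, and define the search vectors p k = (H k)ᵀ *ᵥ (z k). Assume also z k ⬝ᵥ (H k *ᵥ (Aᵀ *ᵥ v k)) ≠ 0 for 1 ≤ k ≤ i. Then the i×i matrix L with entries L j k = (v j) ⬝ᵥ (A *ᵥ (p k)) (1 ≤ j, k ≤ i) is lower triangular (L j k = 0 for j < k) with nonzero diagonal entries, hence nonsingular (the implicit factorization Vᵀ A P = L). -/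

import Mathlib

/-!
Write `Hₖ` for the ABS matrices and `yₖ = Aᵀ vₖ`. Each update `Hₖ ↦ Hₖ₊₁` subtracts a multiple of
`Hₖ yₖ`, scaled so that `Hₖ₊₁ yₖ = 0`, and it preserves every vector already annihilated by `Hₖ`.
Hence `Hₖ yⱼ = 0` for all `j < k`. Since `vⱼᵀ A pₖ = zₖᵀ Hₖ yⱼ`, the matrix `L` vanishes above the
diagonal, and its diagonal entries `zₖᵀ Hₖ yₖ` are nonzero by hypothesis.
-/

open Matrix

namespace Matrix

section ABSUpdate

variable {K ι κ : Type*} [Field K] [Fintype ι] [Fintype κ]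

def absUpdate (H : Matrix ι κ K) (y : κ → K) (w : ι → K) : Matrix ι κ K :=
  H - (1 / (w ⬝ᵥ (H *ᵥ y))) • vecMulVec (H *ᵥ y) (Hᵀ *ᵥ w)

theorem absUpdate_mulVec (H : Matrix ι κ K) (y x : κ → K) (w : ι → K) :
    absUpdate H y w *ᵥ x = H *ᵥ x - ((w ⬝ᵥ (H *ᵥ x)) / (w ⬝ᵥ (H *ᵥ y))) • (H *ᵥ y) := by
  rw [absUpdate, sub_mulVec, smul_mulVec, vecMulVec_mulVec, op_smul_eq_smul, smul_smul,
    mulVec_transpose, ← dotProduct_mulVec, one_div_mul_eq_div]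

theorem absUpdate_mulVec_of_mulVec_eq_zero {H : Matrix ι κ K} {y x : κ → K} (w : ι → K)
    (hx : H *ᵥ x = 0) : absUpdate H y w *ᵥ x = 0 := by
  rw [absUpdate_mulVec, hx, dotProduct_zero, zero_div, zero_smul, sub_zero]

theorem absUpdate_mulVec_self {H : Matrix ι κ K} {y : κ → K} {w : ι → K}
    (hδ : w ⬝ᵥ (H *ᵥ y) ≠ 0) : absUpdate H y w *ᵥ y = 0 := by
  rw [absUpdate_mulVec, div_self hδ, one_smul, sub_self]

theorem mulVec_eq_zero_of_absUpdate {H : ℕ → Matrix ι κ K} {y : ℕ → κ → K} {w : ℕ → ι → K}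
    {j l : ℕ} (hδ : w j ⬝ᵥ (H j *ᵥ y j) ≠ 0)
    (hH : ∀ k, j ≤ k → k < l → H (k + 1) = absUpdate (H k) (y k) (w k)) (hjl : j < l) :
    H l *ᵥ y j = 0 := by
  induction l, hjl using Nat.le_induction with
  | base =>
    rw [hH j le_rfl j.lt_succ_self]
    exact absUpdate_mulVec_self hδ
  | succ l hjl ih =>
    rw [hH l (by omega) l.lt_succ_self]
    exact absUpdate_mulVec_of_mulVec_eq_zero _
      (ih fun k hjk hkl => hH k hjk (hkl.trans l.lt_succ_self))

end ABSUpdate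

theorem dotProduct_mulVec_transpose_mulVec {R ι κ μ : Type*} [CommSemiring R] [Fintype ι]
    [Fintype κ] [Fintype μ] (v : μ → R) (A : Matrix μ κ R) (H : Matrix ι κ R) (z : ι → R) :
    v ⬝ᵥ (A *ᵥ (Hᵀ *ᵥ z)) = z ⬝ᵥ (H *ᵥ (Aᵀ *ᵥ v)) := by
  rw [dotProduct_mulVec, mulVec_transpose, dotProduct_comm, ← dotProduct_mulVec,
    mulVec_transpose, ← vecMul_transpose, dotProduct_comm]

theorem isUnit_det_of_isLowerTriangular {K ι : Type*} [Field K] [Fintype ι] [LinearOrder ι]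
    {M : Matrix ι ι K} (hM : M.IsLowerTriangular) (hdiag : ∀ k, M k k ≠ 0) : IsUnit M.det := by
  rw [det_of_isLowerTriangular M hM, isUnit_iff_ne_zero]
  exact Finset.prod_ne_zero_iff.2 fun k _ => hdiag k

end Matrix

theorem abs_implicit_factorization_lower_triangular {m n : ℕ} (i : ℕ)
    (A : Matrix (Fin m) (Fin n) ℝ)
    (v : ℕ → Fin m → ℝ) (w z : ℕ → Fin n → ℝ)
    (H : ℕ → Matrix (Fin n) (Fin n) ℝ) (p : ℕ → Fin n → ℝ)
    (hrec : ∀ k, 1 ≤ k → k ≤ i →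
      w k ⬝ᵥ (H k *ᵥ (Aᵀ *ᵥ v k)) ≠ 0 ∧
      H (k + 1) = H k - (1 / (w k ⬝ᵥ (H k *ᵥ (Aᵀ *ᵥ v k)))) •
        vecMulVec (H k *ᵥ (Aᵀ *ᵥ v k)) ((H k)ᵀ *ᵥ w k))
    (hp : ∀ k, 1 ≤ k → k ≤ i → p k = (H k)ᵀ *ᵥ z k)
    (hz : ∀ k, 1 ≤ k → k ≤ i → z k ⬝ᵥ (H k *ᵥ (Aᵀ *ᵥ v k)) ≠ 0)
    (L : Matrix (Fin i) (Fin i) ℝ)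
    (hL : ∀ j k : Fin i, L j k = v (j.1 + 1) ⬝ᵥ (A *ᵥ p (k.1 + 1))) :
    (∀ j k : Fin i, (j : ℕ) < (k : ℕ) → L j k = 0) ∧
    (∀ k : Fin i, L k k ≠ 0) ∧ IsUnit L.det := by
  have hLz (j k : Fin i) : L j k = z (k + 1) ⬝ᵥ (H (k + 1) *ᵥ (Aᵀ *ᵥ v (j + 1))) := by
    rw [hL, hp _ (by omega) (by omega), dotProduct_mulVec_transpose_mulVec]
  have hupper (j k : Fin i) (hjk : (j : ℕ) < k) : L j k = 0 := by
    rw [hLz, mulVec_eq_zero_of_absUpdate (hrec _ (by omega) (by omega)).1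
      (fun l _ _ => (hrec l (by omega) (by omega)).2) (by omega), dotProduct_zero]
  have hdiag (k : Fin i) : L k k ≠ 0 := by
    rw [hLz]
    exact hz _ (by omega) (by omega)
  exact ⟨hupper, hdiag, isUnit_det_of_isLowerTriangular (fun j k => hupper j k) hdiag⟩
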